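/- Let F be a Drinfel'd twist on a Hopf algebra H and let (A, ·) be a left H-module algebra with action ▷. Define a ⋆ b = Σ (F₁⁻¹ ▷ a)·(F₂⁻¹ ▷ b). Then ⋆ is associative, has the same unit 1_A, and (A, ⋆) is a left module algebra over the twisted Hopf algebra H^F, i.e. ξ ▷ (a ⋆ b) = Σ (ξ^F_(1) ▷ a) ⋆ (ξ^F_(2) ▷ b) where Δ^F(ξ) = Σ ξ^F_(1) ⊗ ξ^F_(2). -/

import Mathlib

/-! The action of `H ⊗ H` on `A ⊗ A` is an algebra map, and the module-algebra axiom reads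
`ξ ▷ m(w) = m(Δξ ▷ w)` for all `w ∈ A ⊗ A`. Hence both bracketings of `a ⋆ b ⋆ c` are the
iterated product of an element of `H ⊗ H ⊗ H` acting on `a ⊗ b ⊗ c`, namely
`(Δ ⊗ id)(F⁻¹) F⁻¹₁₂` and `(id ⊗ Δ)(F⁻¹) F⁻¹₂₃`, and these agree because they are the
inverses of the two sides of the cocycle identity. The unit laws follow from
`(ε ⊗ id)F⁻¹ = (id ⊗ ε)F⁻¹ = 1`, and `ξ ▷ (a ⋆ b) = m(Δξ F⁻¹ ▷ (a ⊗ b))` with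
`Δξ F⁻¹ = F⁻¹ (F Δξ F⁻¹)`. -/

open scoped TensorProduct

/-- The extension of a bilinear action `act : H → End(A)` to `H ⊗ H` acting on `A ⊗ A`. -/
noncomputable def act2 {k H A : Type*} [CommRing k]
    [AddCommGroup H] [Module k H] [AddCommGroup A] [Module k A]
    (act : H →ₗ[k] (A →ₗ[k] A)) : H ⊗[k] H →ₗ[k] (A ⊗[k] A →ₗ[k] A ⊗[k] A) :=
  (TensorProduct.homTensorHomMap (RingHom.id k) A A A A) ∘ₗ (TensorProduct.map act act)

theorem map_units_inv_eq_one {M N : Type*} [Monoid M] [Monoid N] (f : M →* N) {u : Mˣ}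
    (h : f u = 1) : f ↑u⁻¹ = 1 := by
  calc f ↑u⁻¹ = f ↑u⁻¹ * f u := by rw [h, mul_one]
    _ = 1 := by rw [← map_mul, u.inv_mul, map_one]

theorem map_units_inv_mul_eq_of_map_mul_eq {M N : Type*} [Monoid M] [Monoid N]
    (f₁ f₂ f₃ f₄ : M →* N) {u : Mˣ} (h : f₁ u * f₂ u = f₃ u * f₄ u) :
    f₂ ↑u⁻¹ * f₁ ↑u⁻¹ = f₄ ↑u⁻¹ * f₃ ↑u⁻¹ := by
  have h' : Units.map f₁ u * Units.map f₂ u = Units.map f₃ u * Units.map f₄ u := Units.ext h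
  simpa only [mul_inv_rev, Units.val_mul, Units.coe_map_inv] using
    congrArg (fun v : Nˣ => (↑v⁻¹ : N)) h'

theorem LinearMap.mul'_comp_map_id_mul'_comp_assoc {k A : Type*} [CommSemiring k] [Semiring A]
    [Algebra k A] :
    LinearMap.mul' k A ∘ₗ TensorProduct.map LinearMap.id (LinearMap.mul' k A) ∘ₗ
        (TensorProduct.assoc k A A A).toLinearMap =
      LinearMap.mul' k A ∘ₗ TensorProduct.map (LinearMap.mul' k A) LinearMap.id :=
  TensorProduct.ext_threefold fun a b c => by simp [mul_assoc]

section TensorRep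

open TensorProduct

variable {k : Type*} [CommSemiring k] {H₁ H₂ H₃ M₁ M₂ M₃ : Type*}
  [Semiring H₁] [Algebra k H₁] [Semiring H₂] [Algebra k H₂] [Semiring H₃] [Algebra k H₃]
  [AddCommMonoid M₁] [Module k M₁] [AddCommMonoid M₂] [Module k M₂]
  [AddCommMonoid M₃] [Module k M₃]

noncomputable def tensorRep (ρ₁ : H₁ →ₐ[k] Module.End k M₁) (ρ₂ : H₂ →ₐ[k] Module.End k M₂) :
    H₁ ⊗[k] H₂ →ₐ[k] Module.End k (M₁ ⊗[k] M₂) :=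
  Module.endTensorEndAlgHom.comp (Algebra.TensorProduct.map ρ₁ ρ₂)

variable (ρ₁ : H₁ →ₐ[k] Module.End k M₁) (ρ₂ : H₂ →ₐ[k] Module.End k M₂)
  (ρ₃ : H₃ →ₐ[k] Module.End k M₃)

@[simp]
theorem tensorRep_tmul (x : H₁) (y : H₂) : tensorRep ρ₁ ρ₂ (x ⊗ₜ y) = map (ρ₁ x) (ρ₂ y) := rfl

theorem tensorRep_assoc (X : (H₁ ⊗[k] H₂) ⊗[k] H₃) (w : (M₁ ⊗[k] M₂) ⊗[k] M₃) :
    tensorRep ρ₁ (tensorRep ρ₂ ρ₃) (TensorProduct.assoc k H₁ H₂ H₃ X)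
        (TensorProduct.assoc k M₁ M₂ M₃ w) =
      TensorProduct.assoc k M₁ M₂ M₃ (tensorRep (tensorRep ρ₁ ρ₂) ρ₃ X w) := by
  induction X using TensorProduct.induction_on with
  | zero => simp
  | add X Y hX hY => simp only [map_add, LinearMap.add_apply, hX, hY]
  | tmul x z =>
    induction x using TensorProduct.induction_on with
    | zero => simp
    | add x y hx hy => simp only [add_tmul, map_add, LinearMap.add_apply, hx, hy]
    | tmul x y =>
      exact LinearMap.congr_fun (map_map_comp_assoc_eq (ρ₁ x) (ρ₂ y) (ρ₃ z)) w

end TensorRep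

theorem act2_eq_tensorRep {k H A : Type*} [CommRing k] [Ring H] [Algebra k H]
    [AddCommGroup A] [Module k A] (ρ : H →ₐ[k] Module.End k A) :
    act2 ρ.toLinearMap = (tensorRep ρ ρ).toLinearMap :=
  TensorProduct.ext' fun _ _ => rfl

section Twist

open TensorProduct LinearMap Coalgebra

variable {k H A : Type*} [CommSemiring k] [Semiring H] [Bialgebra k H] [Semiring A] [Algebra k A]

structure IsModuleAlgebra (ρ : H →ₐ[k] Module.End k A) : Prop where
  act_mul (ξ : H) (a b : A) : ρ ξ (a * b) = mul' k A (tensorRep ρ ρ (comul ξ) (a ⊗ₜ b))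
  act_one (ξ : H) : ρ ξ 1 = algebraMap k A (counit ξ)

structure IsDrinfeldTwist (F : (H ⊗[k] H)ˣ) : Prop where
  cocycle : TensorProduct.assoc k H H H ((F : H ⊗[k] H) ⊗ₜ 1) *
      TensorProduct.assoc k H H H (map comul id (F : H ⊗[k] H)) =
    (1 ⊗ₜ (F : H ⊗[k] H)) * map id comul (F : H ⊗[k] H)
  lid_counit : TensorProduct.lid k H (map counit id (F : H ⊗[k] H)) = 1
  rid_counit : TensorProduct.rid k H (map id counit (F : H ⊗[k] H)) = 1

namespace IsDrinfeldTwist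

variable {F : (H ⊗[k] H)ˣ} (hF : IsDrinfeldTwist F)
include hF

theorem inv_cocycle :
    TensorProduct.assoc k H H H (map comul id (↑F⁻¹ : H ⊗[k] H) * ((↑F⁻¹ : H ⊗[k] H) ⊗ₜ 1)) =
      map id comul (↑F⁻¹ : H ⊗[k] H) * (1 ⊗ₜ (↑F⁻¹ : H ⊗[k] H)) := by
  let assocHom := (Algebra.TensorProduct.assoc k k k H H H).toAlgHom
  have := map_units_inv_mul_eq_of_map_mul_eq
    (assocHom.comp Algebra.TensorProduct.includeLeft).toMonoidHom
    (assocHom.comp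
      (Algebra.TensorProduct.map (Bialgebra.comulAlgHom k H) (AlgHom.id k H))).toMonoidHom
    Algebra.TensorProduct.includeRight.toMonoidHom
    (Algebra.TensorProduct.map (AlgHom.id k H) (Bialgebra.comulAlgHom k H)).toMonoidHom
    hF.cocycle
  exact (map_mul assocHom _ _).trans this

theorem lid_counit_inv : TensorProduct.lid k H (map counit id (↑F⁻¹ : H ⊗[k] H)) = 1 :=
  map_units_inv_eq_one ((Algebra.TensorProduct.lid k H).toAlgHom.comp
    (Algebra.TensorProduct.map (Bialgebra.counitAlgHom k H) (AlgHom.id k H))).toMonoidHom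
    hF.lid_counit

theorem rid_counit_inv : TensorProduct.rid k H (map id counit (↑F⁻¹ : H ⊗[k] H)) = 1 :=
  map_units_inv_eq_one ((Algebra.TensorProduct.rid k k H).toAlgHom.comp
    (Algebra.TensorProduct.map (AlgHom.id k H) (Bialgebra.counitAlgHom k H))).toMonoidHom
    hF.rid_counit

end IsDrinfeldTwist

noncomputable def twistMul (ρ : H →ₐ[k] Module.End k A) (G : H ⊗[k] H) (a b : A) : A :=
  mul' k A (tensorRep ρ ρ G (a ⊗ₜ b))

namespace IsModuleAlgebra

variable {ρ : H →ₐ[k] Module.End k A} (hρ : IsModuleAlgebra ρ)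
include hρ

theorem act_mul'_apply (ξ : H) (w : A ⊗[k] A) :
    ρ ξ (mul' k A w) = mul' k A (tensorRep ρ ρ (comul ξ) w) := by
  induction w using TensorProduct.induction_on with
  | zero => simp
  | add v w hv hw => simp only [map_add, hv, hw]
  | tmul a b => exact hρ.act_mul ξ a b

theorem tensorRep_mul'_tmul (X : H ⊗[k] H) (w : A ⊗[k] A) (c : A) :
    tensorRep ρ ρ X (mul' k A w ⊗ₜ c) =
      map (mul' k A) id (tensorRep (tensorRep ρ ρ) ρ (map comul id X) (w ⊗ₜ c)) := by
  induction X using TensorProduct.induction_on with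
  | zero => simp
  | add X Y hX hY => simp only [map_add, LinearMap.add_apply, hX, hY]
  | tmul ξ ζ => simp [hρ.act_mul'_apply]

theorem tensorRep_tmul_mul' (X : H ⊗[k] H) (a : A) (w : A ⊗[k] A) :
    tensorRep ρ ρ X (a ⊗ₜ mul' k A w) =
      map id (mul' k A) (tensorRep ρ (tensorRep ρ ρ) (map id comul X) (a ⊗ₜ w)) := by
  induction X using TensorProduct.induction_on with
  | zero => simp
  | add X Y hX hY => simp only [map_add, LinearMap.add_apply, hX, hY]
  | tmul ξ ζ => simp [hρ.act_mul'_apply]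

theorem twistMul_twistMul_left (G : H ⊗[k] H) (a b c : A) :
    twistMul ρ G (twistMul ρ G a b) c =
      mul' k A (map (mul' k A) id
        (tensorRep (tensorRep ρ ρ) ρ (map comul id G * (G ⊗ₜ 1)) ((a ⊗ₜ b) ⊗ₜ c))) := by
  rw [twistMul, twistMul, hρ.tensorRep_mul'_tmul, map_mul, Module.End.mul_apply]
  simp

theorem twistMul_twistMul_right (G : H ⊗[k] H) (a b c : A) :
    twistMul ρ G a (twistMul ρ G b c) =
      mul' k A (map id (mul' k A)
        (tensorRep ρ (tensorRep ρ ρ) (map id comul G * (1 ⊗ₜ G)) (a ⊗ₜ (b ⊗ₜ c)))) := by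
  rw [twistMul, twistMul, hρ.tensorRep_tmul_mul', map_mul, Module.End.mul_apply]
  simp

theorem twistMul_assoc {G : H ⊗[k] H}
    (hG : TensorProduct.assoc k H H H (map comul id G * (G ⊗ₜ 1)) = map id comul G * (1 ⊗ₜ G))
    (a b c : A) : twistMul ρ G (twistMul ρ G a b) c = twistMul ρ G a (twistMul ρ G b c) := by
  rw [hρ.twistMul_twistMul_left, hρ.twistMul_twistMul_right, ← hG, ← TensorProduct.assoc_tmul,
    tensorRep_assoc]
  exact (LinearMap.congr_fun LinearMap.mul'_comp_map_id_mul'_comp_assoc _).symm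

theorem twistMul_one {G : H ⊗[k] H} (hG : TensorProduct.rid k H (map id counit G) = 1) (a : A) :
    twistMul ρ G a 1 = a := by
  suffices ∀ X : H ⊗[k] H, twistMul ρ X a 1 = ρ (TensorProduct.rid k H (map id counit X)) a by
    rw [this, hG, map_one, Module.End.one_apply]
  intro X
  induction X using TensorProduct.induction_on with
  | zero => simp [twistMul]
  | add X Y hX hY =>
    simp only [twistMul, map_add, LinearMap.add_apply] at hX hY ⊢
    rw [hX, hY]
  | tmul ξ ζ =>
    simp only [twistMul, tensorRep_tmul, map_tmul, hρ.act_one, mul'_apply, id_coe, id_eq, rid_tmul,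
      map_smul, LinearMap.smul_apply]
    rw [Algebra.smul_def, Algebra.commutes]

theorem one_twistMul {G : H ⊗[k] H} (hG : TensorProduct.lid k H (map counit id G) = 1) (a : A) :
    twistMul ρ G 1 a = a := by
  suffices ∀ X : H ⊗[k] H, twistMul ρ X 1 a = ρ (TensorProduct.lid k H (map counit id X)) a by
    rw [this, hG, map_one, Module.End.one_apply]
  intro X
  induction X using TensorProduct.induction_on with
  | zero => simp [twistMul]
  | add X Y hX hY =>
    simp only [twistMul, map_add, LinearMap.add_apply] at hX hY ⊢
    rw [hX, hY]
  | tmul ξ ζ =>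
    simp only [twistMul, tensorRep_tmul, map_tmul, hρ.act_one, mul'_apply, id_coe, id_eq, lid_tmul,
      map_smul, LinearMap.smul_apply]
    rw [Algebra.smul_def]

theorem act_twistMul (G : (H ⊗[k] H)ˣ) (ξ : H) (a b : A) :
    ρ ξ (twistMul ρ G a b) =
      mul' k A (tensorRep ρ ρ G
        (tensorRep ρ ρ ((↑G⁻¹ : H ⊗[k] H) * comul ξ * (G : H ⊗[k] H)) (a ⊗ₜ b))) := by
  simp only [twistMul, hρ.act_mul'_apply, ← Module.End.mul_apply, ← map_mul, ← mul_assoc,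
    Units.mul_inv, one_mul]

end IsModuleAlgebra

end Twist

/-- Deforming the product of a left `H`-module algebra `A` by a Drinfel'd twist `F` on `H`,
via `a ⋆ b = Σ (F₁⁻¹ ▷ a)(F₂⁻¹ ▷ b)`, yields an associative product with the same unit,
and `(A, ⋆)` is a left module algebra over the twisted Hopf algebra `H^F`:
`ξ ▷ (a ⋆ b) = Σ (ξ^F_(1) ▷ a) ⋆ (ξ^F_(2) ▷ b)` where `Δ^F(ξ) = F Δ(ξ) F⁻¹`. -/
theorem twisted_module_algebra
    {k : Type*} [Field k] {H : Type*} [Ring H] [HopfAlgebra k H]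
    {A : Type*} [Ring A] [Algebra k A]
    (act : H →ₗ[k] (A →ₗ[k] A))
    (hact₁ : ∀ (ξ ζ : H) (a : A), act (ξ * ζ) a = act ξ (act ζ a))
    (hact₂ : ∀ a : A, act 1 a = a)
    (hact₃ : ∀ (ξ : H) (a b : A),
      act ξ (a * b) =
        LinearMap.mul' k A ((act2 act) (Coalgebra.comul (R := k) (A := H) ξ) (a ⊗ₜ[k] b)))
    (hact₄ : ∀ ξ : H, act ξ (1 : A) = algebraMap k A (Coalgebra.counit (R := k) (A := H) ξ))
    (F Finv : H ⊗[k] H)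
    (hinv₁ : F * Finv = 1) (hinv₂ : Finv * F = 1)
    (hcocycle :
      (TensorProduct.assoc k H H H) (F ⊗ₜ[k] (1 : H)) *
          (TensorProduct.assoc k H H H)
            ((TensorProduct.map (Coalgebra.comul (R := k) (A := H)) LinearMap.id) F) =
        ((1 : H) ⊗ₜ[k] F) *
          (TensorProduct.map LinearMap.id (Coalgebra.comul (R := k) (A := H))) F)
    (hnorm₁ : (TensorProduct.lid k H)
        ((TensorProduct.map (Coalgebra.counit (R := k) (A := H)) LinearMap.id) F) = 1)
    (hnorm₂ : (TensorProduct.rid k H)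
        ((TensorProduct.map LinearMap.id (Coalgebra.counit (R := k) (A := H))) F) = 1)
    (star : A → A → A)
    (hstar : ∀ a b : A, star a b = LinearMap.mul' k A ((act2 act) Finv (a ⊗ₜ[k] b))) :
    (∀ a b c : A, star (star a b) c = star a (star b c)) ∧
    (∀ a : A, star a 1 = a ∧ star 1 a = a) ∧
    (∀ (ξ : H) (a b : A),
      act ξ (star a b) =
        LinearMap.mul' k A
          ((act2 act) Finv
            ((act2 act) (F * Coalgebra.comul (R := k) (A := H) ξ * Finv) (a ⊗ₜ[k] b)))) := by
  let ρ : H →ₐ[k] Module.End k A :=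
    AlgHom.ofLinearMap act (LinearMap.ext hact₂) fun ξ ζ => LinearMap.ext (hact₁ ξ ζ)
  rw [show act2 act = (tensorRep ρ ρ).toLinearMap from act2_eq_tensorRep ρ] at hact₃ hstar ⊢
  have hρ : IsModuleAlgebra ρ := ⟨hact₃, hact₄⟩
  let uF : (H ⊗[k] H)ˣ := ⟨F, Finv, hinv₁, hinv₂⟩
  have hF : IsDrinfeldTwist uF := ⟨hcocycle, hnorm₁, hnorm₂⟩
  obtain rfl : star = twistMul ρ Finv := funext₂ hstar
  exact ⟨hρ.twistMul_assoc hF.inv_cocycle,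
    fun a => ⟨hρ.twistMul_one hF.rid_counit_inv a, hρ.one_twistMul hF.lid_counit_inv a⟩,
    hρ.act_twistMul uF⁻¹⟩
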